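/- Let A, B ⊆ ℤ be finite nonempty sets and let U ⊆ {x₀, x₁} ⊆ ℤ with x₀ ≠ x₁ and U nonempty. Then |A + B + U| ≥ |U| · |A|^{1/2} · |B|^{1/2}. -/

import Mathlib

/-!
Applying Cauchy–Davenport twice gives `|A + B + U| ≥ |A| + |B| + |U| - 2`. With `u = |U| ≤ 2`
this dominates `u √|A| √|B|`, because `|A| + |B| ≥ 2 √|A| √|B|` by AM–GM and the remaining
term `(2 - u) (√|A| √|B| - 1)` is nonnegative.
-/

open scoped Pointwise

open Finset

section CauchyDavenport

variable {α : Type*} [LinearOrder α] [Add α] [IsCancelAdd α] [AddLeftMono α] [AddRightMono α]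

lemma card_add_card_add_card_le_card_add_add {s t u : Finset α} (hs : s.Nonempty)
    (ht : t.Nonempty) (hu : u.Nonempty) : #s + #t + #u ≤ #(s + t + u) + 2 := by
  have hst := cauchy_davenport_add_of_linearOrder_isCancelAdd hs ht
  have hstu := cauchy_davenport_add_of_linearOrder_isCancelAdd (hs.add ht) hu
  have := hs.card_pos
  have := ht.card_pos
  have := hu.card_pos
  omega

end CauchyDavenport

lemma mul_sqrt_mul_sqrt_le_add_add_sub_two {a b u : ℝ} (ha : 1 ≤ a) (hb : 1 ≤ b) (hu : u ≤ 2) :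
    u * √a * √b ≤ a + b + u - 2 := by
  have hsa : √a ^ 2 = a := Real.sq_sqrt (by linarith)
  have hsb : √b ^ 2 = b := Real.sq_sqrt (by linarith)
  have hprod : 1 ≤ √a * √b :=
    one_le_mul_of_one_le_of_one_le (Real.one_le_sqrt.2 ha) (Real.one_le_sqrt.2 hb)
  have am_gm : 2 * (√a * √b) ≤ a + b := by nlinarith [sq_nonneg (√a - √b)]
  nlinarith [mul_nonneg (sub_nonneg.2 hu) (sub_nonneg.2 hprod)]

theorem sumset_with_pair_subset_general
    (A B : Finset ℤ) (hA : A.Nonempty) (hB : B.Nonempty)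
    (x₀ x₁ : ℤ) (U : Finset ℤ) (hU : U ⊆ {x₀, x₁})
    (hUne : U.Nonempty) :
    ((A + B + U).card : ℝ) ≥ U.card * Real.sqrt A.card * Real.sqrt B.card := by
  have hU_card : #U ≤ 2 := (card_le_card hU).trans card_le_two
  have hsum : (#A + #B + #U : ℝ) ≤ #(A + B + U) + 2 := by
    exact_mod_cast card_add_card_add_card_le_card_add_add hA hB hUne
  have hbound := mul_sqrt_mul_sqrt_le_add_add_sub_two (u := #U)
    (Nat.one_le_cast.2 hA.card_pos) (Nat.one_le_cast.2 hB.card_pos) (by exact_mod_cast hU_card)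
  linarith

theorem sumset_with_pair_subset
    (A B : Finset ℤ) (hA : A.Nonempty) (hB : B.Nonempty)
    (x₀ x₁ : ℤ) (hx : x₀ ≠ x₁) (U : Finset ℤ) (hU : U ⊆ {x₀, x₁})
    (hUne : U.Nonempty) :
    ((A + B + U).card : ℝ) ≥ U.card * Real.sqrt A.card * Real.sqrt B.card :=
  sumset_with_pair_subset_general A B hA hB x₀ x₁ U hU hUne
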